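/- arXiv:1907.12979 — 5 statements merged into one kernel-verified Lean document; each statement's English description precedes it below -/
import Mathlib

section
/- The product over all primes p of (p^2 + 1)/(p^2 - 1) equals 5/2. -/
/-!
Euler products give `ζ(k) = ∏_p (1 - p⁻ᵏ)⁻¹` for `k = 2, 4`. Since `1 - p⁻⁴ = (1 - p⁻²)(1 + p⁻²)`,
the factors of `ζ(2)² / ζ(4)` are `(1 + p⁻²) / (1 - p⁻²) = (p² + 1) / (p² - 1)`, so the product
equals `(π² / 6)² / (π⁴ / 90) = 5 / 2`.
-/

open Real

theorem HasSum.hasProd_primes_inv_one_sub_inv_pow {k : ℕ} {a : ℝ}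
    (h : HasSum (fun n : ℕ ↦ 1 / (n : ℝ) ^ k) a) :
    HasProd (fun p : Nat.Primes ↦ (1 - (((p : ℕ) : ℝ) ^ k)⁻¹)⁻¹) a := by
  have hk : k ≠ 0 := (Real.summable_one_div_nat_pow.mp h.summable).ne_bot
  simp only [one_div] at h
  let f : ℕ →*₀ ℝ :=
    invMonoidWithZeroHom.comp
      ((powMonoidWithZeroHom hk).comp (Nat.castRingHom ℝ).toMonoidWithZeroHom)
  have hf : ∀ n, f n = ((n : ℝ) ^ k)⁻¹ := fun _ ↦ rfl
  have hsum : Summable (‖f ·‖) := by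
    simpa only [hf, norm_inv, norm_pow, Real.norm_natCast] using h.summable
  simpa only [hf, h.tsum_eq] using EulerProduct.eulerProduct_completely_multiplicative_hasProd hsum

theorem sq_add_one_div_sq_sub_one_eq {K : Type*} [Field K] {x : K} (hx : x ≠ 0) :
    (x ^ 2 + 1) / (x ^ 2 - 1) = (1 - (x ^ 2)⁻¹)⁻¹ * (1 - (x ^ 2)⁻¹)⁻¹ / (1 - (x ^ 4)⁻¹)⁻¹ := by
  have h4 : 1 - (x ^ 4)⁻¹ = (1 - (x ^ 2)⁻¹) * (1 + (x ^ 2)⁻¹) := by ring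
  rw [h4, div_inv_eq_mul]
  by_cases hx1 : x ^ 2 = 1
  · simp [hx1]
  have hx1' : x ^ 2 - 1 ≠ 0 := sub_ne_zero.mpr hx1
  field_simp

theorem prod_primes_sq_add_one_div_sq_sub_one :
    ∏' p : Nat.Primes, (((p : ℕ) : ℝ) ^ 2 + 1) / (((p : ℕ) : ℝ) ^ 2 - 1) = 5 / 2 := by
  have h2 := hasSum_zeta_two.hasProd_primes_inv_one_sub_inv_pow
  have h4 := hasSum_zeta_four.hasProd_primes_inv_one_sub_inv_pow
  have hprod := (h2.mul h2).div₀ h4 (by positivity)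
  convert hprod.tprod_eq using 1
  · exact tprod_congr fun p ↦ sq_add_one_div_sq_sub_one_eq (Nat.cast_ne_zero.mpr p.prop.ne_zero)
  · field_simp
    ring
end

section
/- Fix an integer s ≥ 1 and a real number x ≥ 2. Write ∏_{p ≤ x, p prime} (1 − p^{-s}) = p_x/q_x in lowest terms with p_x, q_x positive integers. Then p_x ≥ 2^{π(x) − s − 1} and q_x ≥ 2^{π(x) − s − 1}, where π(x) is the number of primes at most x. -/
open Finset

theorem euler_partial_product_num_den_lower_bound (s : ℕ) (hs : 1 ≤ s)
    (x : ℝ) (hx : 2 ≤ x) :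
    (2 : ℝ) ^ ((Nat.primeCounting ⌊x⌋₊ : ℝ) - s - 1) ≤
      (((∏ p ∈ (Finset.Iic ⌊x⌋₊).filter Nat.Prime, (1 - 1 / (p : ℚ) ^ s)).num : ℝ)) ∧
    (2 : ℝ) ^ ((Nat.primeCounting ⌊x⌋₊ : ℝ) - s - 1) ≤
      (((∏ p ∈ (Finset.Iic ⌊x⌋₊).filter Nat.Prime, (1 - 1 / (p : ℚ) ^ s)).den : ℝ)) := by
  classical
  set P : Finset ℕ := (Finset.Iic ⌊x⌋₊).filter Nat.Prime with hP
  set Q : ℚ := ∏ p ∈ P, (1 - 1 / (p : ℚ) ^ s) with hQ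
  have hx2 : 2 ≤ ⌊x⌋₊ := Nat.le_floor (by exact_mod_cast hx)
  have h2P : 2 ∈ P := by simp [hP, Nat.prime_two, hx2]
  have hcard : P.card = Nat.primeCounting ⌊x⌋₊ := by
    rw [Nat.primeCounting, Nat.primeCounting', Nat.count_eq_card_filter_range]
    congr 1
    ext p
    simp [hP, Nat.lt_succ_iff]
  have hpP : ∀ p ∈ P, 2 ≤ p := fun p hp => (Finset.mem_filter.mp hp).2.two_le
  have hpow2 : ∀ p ∈ P, 2 ≤ p ^ s := fun p hp =>
    le_trans (hpP p hp) (Nat.le_self_pow (by omega) p)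
  have hfpos : ∀ p ∈ P, (0:ℚ) < 1 - 1 / (p : ℚ) ^ s := by
    intro p hp
    have h2 : (2:ℚ) ≤ (p:ℚ) ^ s := by exact_mod_cast hpow2 p hp
    have : (1:ℚ) / (p:ℚ)^s < 1 := by
      rw [div_lt_one (by linarith)]; linarith
    linarith
  have hfle : ∀ p ∈ P, 1 - 1 / (p : ℚ) ^ s ≤ 1 := by
    intro p hp
    have h2 : (2:ℚ) ≤ (p:ℚ) ^ s := by exact_mod_cast hpow2 p hp
    have : (0:ℚ) ≤ 1 / (p:ℚ)^s := by positivity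
    linarith
  have hQpos : 0 < Q := Finset.prod_pos hfpos
  have hQle : Q ≤ 1 :=
    Finset.prod_le_one (fun p hp => (hfpos p hp).le) hfle
  set N : ℕ := ∏ p ∈ P, (p ^ s - 1) with hN
  set D : ℕ := ∏ p ∈ P, p ^ s with hD
  have hNne : ∀ p ∈ P, p ^ s - 1 ≠ 0 := fun p hp => by have := hpow2 p hp; omega
  have hDne : ∀ p ∈ P, p ^ s ≠ 0 := fun p hp => by have := hpow2 p hp; omega
  have hN0 : N ≠ 0 := Finset.prod_ne_zero_iff.mpr hNne
  have hD0 : D ≠ 0 := Finset.prod_ne_zero_iff.mpr hDne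
  have hQND : Q = (N : ℚ) / D := by
    rw [hQ, hN, hD, Nat.cast_prod, Nat.cast_prod, ← Finset.prod_div_distrib]
    refine Finset.prod_congr rfl fun p hp => ?_
    have h2 : 2 ≤ p ^ s := hpow2 p hp
    have hc : ((p ^ s - 1 : ℕ) : ℚ) = (p:ℚ) ^ s - 1 := by
      push_cast [Nat.cast_sub (by omega : 1 ≤ p ^ s)]; ring
    have hne : ((p:ℚ))^s ≠ 0 := by
      have : (2:ℚ) ≤ (p:ℚ)^s := by exact_mod_cast h2
      linarith
    rw [hc]
    field_simp
    push_cast; ring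
  have hnumpos : 0 < Q.num := Rat.num_pos.mpr hQpos
  set n : ℕ := Q.num.toNat with hn
  have hz : (n : ℤ) = Q.num := Int.toNat_of_nonneg hnumpos.le
  have hn0 : n ≠ 0 := by omega
  have hden0 : Q.den ≠ 0 := Q.den_nz
  have h1 : (Q.num : ℚ) * D = N * Q.den := by
    have h2 : (Q.num : ℚ) / Q.den = (N:ℚ)/D := by rw [Rat.num_div_den]; exact hQND
    have hD0' : (D:ℚ) ≠ 0 := by exact_mod_cast hD0
    have hden0' : (Q.den:ℚ) ≠ 0 := by exact_mod_cast hden0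
    field_simp at h2
    linarith [h2]
  have h1' : Q.num * D = N * Q.den := by exact_mod_cast h1
  have hcross : n * D = N * Q.den := by zify [hz]; exact_mod_cast h1'
  -- factorization at 2
  have hfac : n.factorization 2 + D.factorization 2
      = N.factorization 2 + Q.den.factorization 2 := by
    have := congrArg (fun m => m.factorization 2) hcross
    simpa [Nat.factorization_mul hn0 hD0, Nat.factorization_mul hN0 hden0] using this
  have hDfac : D.factorization 2 = s := by
    rw [hD, Nat.factorization_prod hDne]
    rw [Finsupp.finset_sum_apply]
    rw [Finset.sum_eq_single 2]
    · rw [Nat.factorization_pow]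
      simp [Nat.Prime.factorization Nat.prime_two]
    · intro p hp hne
      rw [Nat.factorization_pow]
      have hpr := (Finset.mem_filter.mp hp).2
      simp [Nat.Prime.factorization hpr, hne]
    · intro h; exact absurd h2P h
  have hNfac : P.card - 1 ≤ N.factorization 2 := by
    have hkey : ∀ p ∈ P.erase 2, 1 ≤ (p ^ s - 1).factorization 2 := by
      intro p hp
      have hp2 : p ≠ 2 := Finset.ne_of_mem_erase hp
      have hpm : p ∈ P := Finset.mem_of_mem_erase hp
      have hpr := (Finset.mem_filter.mp hpm).2
      have hodd : Odd p := hpr.odd_of_ne_two hp2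
      have hodds : Odd (p ^ s) := hodd.pow
      obtain ⟨k, hk⟩ := hodds
      have hdvd : 2 ∣ p ^ s - 1 := ⟨k, by omega⟩
      have := Nat.Prime.factorization_pos_of_dvd Nat.prime_two (hNne p hpm) hdvd
      omega
    calc P.card - 1 = (P.erase 2).card := (Finset.card_erase_of_mem h2P).symm
      _ = ∑ _p ∈ P.erase 2, 1 := by simp
      _ ≤ ∑ p ∈ P.erase 2, (p ^ s - 1).factorization 2 := Finset.sum_le_sum hkey
      _ ≤ ∑ p ∈ P, (p ^ s - 1).factorization 2 :=
          Finset.sum_le_sum_of_subset (Finset.erase_subset _ _)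
      _ = N.factorization 2 := by
          rw [hN, Nat.factorization_prod hNne, Finsupp.finset_sum_apply]
  have hmain : P.card ≤ n.factorization 2 + s + 1 := by omega
  -- n ≥ 2 ^ (card - s - 1)
  have hnlb : 2 ^ (P.card - s - 1) ≤ n := by
    calc 2 ^ (P.card - s - 1) ≤ 2 ^ (n.factorization 2) :=
          Nat.pow_le_pow_right (by norm_num) (by omega)
      _ ≤ n := Nat.le_of_dvd (Nat.pos_of_ne_zero hn0) (Nat.ordProj_dvd n 2)
  have hnum_real : ((Q.num : ℝ)) = (n : ℝ) := by exact_mod_cast hz.symm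
  have hnd : n ≤ Q.den := by
    have h2 : (Q.num : ℚ) ≤ Q.den := by
      have hdpos : (0:ℚ) < Q.den := by positivity
      calc (Q.num : ℚ) = (Q.num / Q.den) * Q.den := by field_simp
        _ = Q * Q.den := by rw [Rat.num_div_den]
        _ ≤ 1 * Q.den := mul_le_mul_of_nonneg_right hQle hdpos.le
        _ = Q.den := one_mul _
    have : (n : ℚ) ≤ Q.den := by rw [show ((n:ℚ)) = ((Q.num : ℚ)) by exact_mod_cast hz]; exact h2
    exact_mod_cast this
  -- conclude: enough to bound n
  have key : (2 : ℝ) ^ ((Nat.primeCounting ⌊x⌋₊ : ℝ) - s - 1) ≤ (n : ℝ) := by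
    rcases le_or_gt (Nat.primeCounting ⌊x⌋₊) (s + 1) with h | h
    · have he : ((Nat.primeCounting ⌊x⌋₊ : ℝ) - s - 1) ≤ 0 := by
        have : (Nat.primeCounting ⌊x⌋₊ : ℝ) ≤ (s : ℝ) + 1 := by exact_mod_cast h
        linarith
      calc (2:ℝ) ^ ((Nat.primeCounting ⌊x⌋₊ : ℝ) - s - 1)
          ≤ 1 := Real.rpow_le_one_of_one_le_of_nonpos (by norm_num) he
        _ ≤ (n : ℝ) := by exact_mod_cast Nat.one_le_iff_ne_zero.mpr hn0
    · have hk : ((Nat.primeCounting ⌊x⌋₊ : ℝ) - s - 1)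
          = ((Nat.primeCounting ⌊x⌋₊ - s - 1 : ℕ) : ℝ) := by
        rw [Nat.cast_sub (show 1 ≤ Nat.primeCounting ⌊x⌋₊ - s by omega),
          Nat.cast_sub (show s ≤ Nat.primeCounting ⌊x⌋₊ by omega)]
        push_cast
        ring
      rw [hk, Real.rpow_natCast]
      have : (2:ℕ) ^ (Nat.primeCounting ⌊x⌋₊ - s - 1) ≤ n := by rw [← hcard]; exact hnlb
      exact_mod_cast this
  constructor
  · rw [hnum_real] at *; exact key
  · refine le_trans key ?_
    exact_mod_cast hnd
end

section
/- Fix an integer s ≥ 1 and a real x ≥ 2. Write ∏_{p ≤ x, p prime} (p^{2s} − 1)/(p^{2s} + 1) = p_x/q_x in lowest terms with p_x, q_x positive integers. Then p_x ≥ 2^{π(x) − s − 1} and q_x ≥ 2^{π(x) − s − 1}. -/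
lemma odd_key (s : ℕ) {z : ℤ} (hz : Odd z) :
    (8 : ℤ) ∣ z ^ (2 * s) - 1 ∧ ∃ c : ℤ, z ^ (2 * s) + 1 = 2 * c ∧ Odd c := by
  obtain ⟨t, ht⟩ := hz
  obtain ⟨u, hu⟩ := Int.even_mul_succ_self t
  have h2 : z ^ 2 = 8 * u + 1 := by rw [ht]; linear_combination 4 * hu
  have h8 : (8 : ℤ) ∣ z ^ (2 * s) - 1 := by
    have hd := sub_dvd_pow_sub_pow (z ^ 2) 1 s
    rw [one_pow, ← pow_mul] at hd
    have h81 : (8 : ℤ) ∣ z ^ 2 - 1 := ⟨u, by rw [h2]; ring⟩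
    exact h81.trans hd
  obtain ⟨w, hw⟩ := h8
  exact ⟨⟨w, hw⟩, ⟨4 * w + 1, by linarith, ⟨2 * w, by ring⟩⟩⟩

theorem partial_product_ratio_num_den_lower_bound (s : ℕ) (hs : 1 ≤ s)
    (x : ℝ) (hx : 2 ≤ x) :
    (2 : ℝ) ^ ((Nat.primeCounting ⌊x⌋₊ : ℝ) - s - 1) ≤
      (((∏ p ∈ (Finset.Iic ⌊x⌋₊).filter Nat.Prime,
          (((p : ℚ) ^ (2 * s) - 1) / ((p : ℚ) ^ (2 * s) + 1))).num : ℝ)) ∧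
    (2 : ℝ) ^ ((Nat.primeCounting ⌊x⌋₊ : ℝ) - s - 1) ≤
      (((∏ p ∈ (Finset.Iic ⌊x⌋₊).filter Nat.Prime,
          (((p : ℚ) ^ (2 * s) - 1) / ((p : ℚ) ^ (2 * s) + 1))).den : ℝ)) := by
  set n := ⌊x⌋₊ with hn
  have hn2 : 2 ≤ n := Nat.le_floor (by exact_mod_cast hx)
  set S := (Finset.Iic n).filter Nat.Prime with hS
  set Q := ∏ p ∈ S, (((p : ℚ) ^ (2 * s) - 1) / ((p : ℚ) ^ (2 * s) + 1)) with hQdef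
  set k := S.card with hk
  have hcard : Nat.primeCounting n = k := by
    rw [Nat.primeCounting, Nat.primeCounting', Nat.count_eq_card_filter_range, hk, hS]
    congr 1
    ext p
    simp [Finset.mem_range, Nat.lt_succ_iff]
  have h2S : 2 ∈ S := by simp [hS, hn2, Nat.prime_two]
  have hk1 : 1 ≤ k := Finset.card_pos.mpr ⟨2, h2S⟩
  -- basic facts about elements of S
  have hprime : ∀ p ∈ S, Nat.Prime p := fun p hp => (Finset.mem_filter.mp hp).2
  have hone_lt : ∀ p ∈ S, (1 : ℚ) < (p : ℚ) ^ (2 * s) := by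
    intro p hp
    have : (1 : ℚ) < (p : ℚ) := by exact_mod_cast (hprime p hp).one_lt
    exact one_lt_pow₀ this (by omega)
  -- positivity and ≤ 1
  have hQpos : 0 < Q := by
    apply Finset.prod_pos
    intro p hp
    have := hone_lt p hp
    apply div_pos <;> linarith
  have hQle1 : Q ≤ 1 := by
    apply Finset.prod_le_one
    · intro p hp
      have := hone_lt p hp
      apply div_nonneg <;> linarith
    · intro p hp
      have := hone_lt p hp
      rw [div_le_one (by linarith)]
      linarith
  have hnum_pos : 0 < Q.num := Rat.num_pos.mpr hQpos
  have hnumden : Q.num ≤ (Q.den : ℤ) := by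
    have h1 : (Q.num : ℚ) ≤ (Q.den : ℚ) := by
      rw [← Rat.num_div_den Q] at hQle1
      have hdpos : (0 : ℚ) < (Q.den : ℚ) := by exact_mod_cast Q.pos
      exact_mod_cast (div_le_one hdpos).mp hQle1
    exact_mod_cast h1
  -- integer products
  set N : ℤ := ∏ p ∈ S, ((p : ℤ) ^ (2 * s) - 1) with hN
  set D : ℤ := ∏ p ∈ S, ((p : ℤ) ^ (2 * s) + 1) with hD
  have hDpos : 0 < D := by
    apply Finset.prod_pos
    intro p hp
    have : (1 : ℤ) ≤ (p : ℤ) := by exact_mod_cast (hprime p hp).one_lt.le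
    positivity
  have hQND : Q = (N : ℚ) / (D : ℚ) := by
    rw [hQdef, hN, hD]
    push_cast
    rw [Finset.prod_div_distrib]
  -- cross multiplication
  have hcross : Q.num * D = N * (Q.den : ℤ) := by
    have h1 : (Q.num : ℚ) / (Q.den : ℚ) = (N : ℚ) / (D : ℚ) := by
      rw [Rat.num_div_den]; exact hQND
    have hd0 : ((Q.den : ℚ)) ≠ 0 := by exact_mod_cast Q.den_nz
    have hD0 : ((D : ℚ)) ≠ 0 := by exact_mod_cast hDpos.ne'
    have := (div_eq_div_iff hd0 hD0).mp h1
    exact_mod_cast this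
  -- odd primes
  set T := S.erase 2 with hT
  have hTcard : T.card = k - 1 := by rw [hT, Finset.card_erase_of_mem h2S]
  have hTodd : ∀ p ∈ T, Odd ((p : ℤ)) := by
    intro p hp
    have hpne : p ≠ 2 := (Finset.mem_erase.mp hp).1
    exact ((hprime p (Finset.mem_erase.mp hp).2).odd_of_ne_two hpne).natCast
  -- divisibility of N
  have hNdvd : (2 : ℤ) ^ (3 * (k - 1)) ∣ N := by
    have h8 : (8 : ℤ) ^ T.card ∣ ∏ p ∈ T, ((p : ℤ) ^ (2 * s) - 1) := by
      rw [← Finset.prod_const]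
      exact Finset.prod_dvd_prod_of_dvd _ _ fun p hp => (odd_key s (hTodd p hp)).1
    have hsplit : N = ((2 : ℤ) ^ (2 * s) - 1) * ∏ p ∈ T, ((p : ℤ) ^ (2 * s) - 1) := by
      rw [hN, ← Finset.mul_prod_erase S (fun p => ((p : ℤ) ^ (2 * s) - 1)) h2S, hT]
      norm_num
    rw [hsplit, hTcard] at *
    have : (2 : ℤ) ^ (3 * (k - 1)) = 8 ^ (k - 1) := by
      rw [show (8 : ℤ) = 2 ^ 3 by norm_num, ← pow_mul, Nat.mul_comm]
    rw [this]
    exact Dvd.dvd.mul_left (by rwa [hTcard] at h8) _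
  -- decomposition of D
  have hDdecomp : ∃ M : ℤ, ¬ (2 : ℤ) ∣ M ∧ D = 2 ^ (k - 1) * M := by
    set c : ℕ → ℤ := fun p => ((p : ℤ) ^ (2 * s) + 1) / 2 with hc
    have hcprop : ∀ p ∈ T, (p : ℤ) ^ (2 * s) + 1 = 2 * c p ∧ Odd (c p) := by
      intro p hp
      obtain ⟨c0, hc0, hc0odd⟩ := (odd_key s (hTodd p hp)).2
      have : c p = c0 := by rw [hc]; simp [hc0, Int.mul_ediv_cancel_left _ two_ne_zero]
      exact ⟨by rw [this]; exact hc0, by rw [this]; exact hc0odd⟩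
    have hTprod : ∏ p ∈ T, ((p : ℤ) ^ (2 * s) + 1) = 2 ^ T.card * ∏ p ∈ T, c p := by
      rw [← Finset.prod_const, ← Finset.prod_mul_distrib]
      exact Finset.prod_congr rfl fun p hp => (hcprop p hp).1
    refine ⟨((2 : ℤ) ^ (2 * s) + 1) * ∏ p ∈ T, c p, ?_, ?_⟩
    · intro hdvd
      rcases (Int.prime_two.dvd_mul).mp hdvd with h | h
      · have h2p : (2 : ℤ) ∣ 2 ^ (2 * s) := dvd_pow_self 2 (by omega)
        obtain ⟨a, ha⟩ := h2p
        obtain ⟨b, hb⟩ := h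
        omega
      · rw [Int.prime_two.dvd_finset_prod_iff] at h
        obtain ⟨p, hp, hpd⟩ := h
        obtain ⟨w, hw⟩ := (hcprop p hp).2
        obtain ⟨v, hv⟩ := hpd
        omega
    · rw [hD, hT, ← Finset.mul_prod_erase S _ h2S, ← hT, hTprod, hTcard]
      push_cast
      ring
  obtain ⟨M, hM2, hDM⟩ := hDdecomp
  -- 2^(2(k-1)) ∣ Q.num
  have hnumdvd : (2 : ℤ) ^ (2 * (k - 1)) ∣ Q.num := by
    have h1 : (2 : ℤ) ^ (2 * (k - 1)) * 2 ^ (k - 1) ∣ (Q.num * M) * 2 ^ (k - 1) := by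
      rw [← pow_add]
      have : 2 * (k - 1) + (k - 1) = 3 * (k - 1) := by ring
      rw [this]
      calc (2 : ℤ) ^ (3 * (k - 1)) ∣ N := hNdvd
        _ ∣ N * (Q.den : ℤ) := dvd_mul_right _ _
        _ = Q.num * M * 2 ^ (k - 1) := by rw [← hcross, hDM]; ring
    have h2 : (2 : ℤ) ^ (2 * (k - 1)) ∣ Q.num * M :=
      (mul_dvd_mul_iff_right (pow_ne_zero _ two_ne_zero)).mp h1
    exact Int.prime_two.pow_dvd_of_dvd_mul_right _ hM2 h2
  have hnumge : (2 : ℤ) ^ (2 * (k - 1)) ≤ Q.num := Int.le_of_dvd hnum_pos hnumdvd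
  -- real inequalities
  have hrpow : (2 : ℝ) ^ ((Nat.primeCounting n : ℝ) - s - 1) ≤ (2 : ℝ) ^ ((2 * (k - 1) : ℕ) : ℝ) := by
    apply Real.rpow_le_rpow_of_exponent_le one_le_two
    rw [hcard]
    have : ((2 * (k - 1) : ℕ) : ℝ) = 2 * ((k : ℝ) - 1) := by
      push_cast [Nat.cast_sub hk1]; ring
    rw [this]
    have hk1' : (1 : ℝ) ≤ (k : ℝ) := by exact_mod_cast hk1
    have hs' : (1 : ℝ) ≤ (s : ℝ) := by exact_mod_cast hs
    linarith
  have hfinal : (2 : ℝ) ^ ((Nat.primeCounting n : ℝ) - s - 1) ≤ ((2 : ℤ) ^ (2 * (k - 1)) : ℝ) := by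
    refine hrpow.trans_eq ?_
    rw [Real.rpow_natCast]
    push_cast
    ring
  constructor
  · exact hfinal.trans (by exact_mod_cast hnumge)
  · exact hfinal.trans (by exact_mod_cast hnumge.trans hnumden)
end

section
/- For every real x ≥ 2, |2/5 − ∏_{p ≤ x, p prime} (p²−1)/(p²+1)| ≤ C/x for some absolute constant C > 0. -/
open Real Finset

/-- The completely multiplicative function `n ↦ (n²)⁻¹` as a monoid hom. -/
noncomputable def sqHom : ℕ →* ℝ where
  toFun n := ((n : ℝ) ^ 2)⁻¹
  map_one' := by norm_num
  map_mul' m n := by push_cast; rw [mul_pow, mul_inv]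

/-- The completely multiplicative function `n ↦ (n⁴)⁻¹` as a monoid hom. -/
noncomputable def quarticHom : ℕ →* ℝ where
  toFun n := ((n : ℝ) ^ 4)⁻¹
  map_one' := by norm_num
  map_mul' m n := by push_cast; rw [mul_pow, mul_inv]

@[simp] lemma sqHom_apply (n : ℕ) : sqHom n = ((n : ℝ) ^ 2)⁻¹ := rfl
@[simp] lemma quarticHom_apply (n : ℕ) : quarticHom n = ((n : ℝ) ^ 4)⁻¹ := rfl

lemma summable_sqHom : Summable (⇑sqHom) := by
  simpa [sqHom] using (Real.summable_nat_pow_inv (p := 2)).mpr one_lt_two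

lemma summable_quarticHom : Summable (⇑quarticHom) := by
  simpa [quarticHom] using (Real.summable_nat_pow_inv (p := 4)).mpr (by norm_num)

/-- Tail bound: the difference between the full sum and the sum over `Iic n`-factored
numbers is between `0` and `2/(n+1)`, for nonnegative `f` dominated by `m ↦ (m²)⁻¹`
and vanishing at `0`. -/
lemma tail_bound (f : ℕ → ℝ) (hf : Summable f) (h0 : f 0 = 0)
    (hnn : ∀ m, 0 ≤ f m) (hub : ∀ m, f m ≤ ((m : ℝ) ^ 2)⁻¹) (n : ℕ) :
    0 ≤ (∑' m, f m) - ∑' m : Nat.factoredNumbers (Finset.Iic n), f (m : ℕ) ∧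
    (∑' m, f m) - (∑' m : Nat.factoredNumbers (Finset.Iic n), f (m : ℕ)) ≤ 2 / (n + 1) := by
  classical
  have hsplit := Summable.tsum_subtype_add_tsum_subtype_compl hf (Nat.factoredNumbers (Finset.Iic n))
  set g := ((Nat.factoredNumbers (Finset.Iic n))ᶜ).indicator f with hg_def
  have hcompl : (∑' m : ↥(Nat.factoredNumbers (Finset.Iic n))ᶜ, f (m : ℕ)) = ∑' m, g m :=
    tsum_subtype _ _
  have hdiff : (∑' m, f m) - (∑' m : Nat.factoredNumbers (Finset.Iic n), f (m : ℕ))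
      = ∑' m, g m := by
    rw [← hcompl]; linarith [hsplit]
  have hgnn : ∀ m, 0 ≤ g m := fun m => Set.indicator_nonneg (fun x _ => hnn x) m
  have hg : Summable g := hf.indicator _
  have hglef : ∀ m, g m ≤ f m := fun m => Set.indicator_le_self' (fun x _ => hnn x) m
  have key : ∀ m, ¬ n < m → g m = 0 := by
    intro m hm
    rcases Nat.eq_zero_or_pos m with rfl | hmpos
    · by_cases h : (0 : ℕ) ∈ ((Nat.factoredNumbers (Finset.Iic n))ᶜ)
      · simpa [hg_def, Set.indicator_of_mem h] using h0
      · simp [hg_def, Set.indicator_of_notMem h]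
    · have hmem : m ∈ Nat.factoredNumbers (Finset.Iic n) := by
        rw [Nat.mem_factoredNumbers_iff_forall_le]
        exact ⟨hmpos.ne', fun p hpm _ _ => Finset.mem_Iic.mpr (hpm.trans (not_lt.mp hm))⟩
      exact Set.indicator_of_notMem (by simpa using hmem) f
  constructor
  · rw [hdiff]; exact tsum_nonneg hgnn
  · rw [hdiff]
    apply Summable.tsum_le_of_sum_le hg
    intro t
    have h1 : ∑ m ∈ t, g m = ∑ m ∈ t.filter (fun m => n < m), g m :=
      (Finset.sum_filter_of_ne (fun m _ hne => by_contra fun h => hne (key m h))).symm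
    rw [h1]
    have h2 : ∑ m ∈ t.filter (fun m => n < m), g m
        ≤ ∑ m ∈ t.filter (fun m => n < m), ((m : ℝ) ^ 2)⁻¹ :=
      Finset.sum_le_sum (fun m _ => (hglef m).trans (hub m))
    have h3 : t.filter (fun m => n < m) ⊆ Finset.Ioo n (t.sup id + 1) := by
      intro m hm
      rw [Finset.mem_filter] at hm
      exact Finset.mem_Ioo.mpr ⟨hm.2, Nat.lt_succ_of_le (Finset.le_sup (f := id) hm.1)⟩
    have h4 : ∑ m ∈ t.filter (fun m => n < m), ((m : ℝ) ^ 2)⁻¹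
        ≤ ∑ m ∈ Finset.Ioo n (t.sup id + 1), ((m : ℝ) ^ 2)⁻¹ :=
      Finset.sum_le_sum_of_subset_of_nonneg h3 (fun m _ _ => by positivity)
    calc ∑ m ∈ t.filter (fun m => n < m), g m
        ≤ ∑ m ∈ Finset.Ioo n (t.sup id + 1), ((m : ℝ) ^ 2)⁻¹ := h2.trans h4
      _ ≤ 2 / (n + 1) := sum_Ioo_inv_sq_le n _

set_option maxHeartbeats 1000000 in
theorem partial_product_rate_of_convergence :
    ∃ C > (0 : ℝ), ∀ x : ℝ, 2 ≤ x →
      |2 / 5 - ∏ p ∈ (Finset.Iic ⌊x⌋₊).filter Nat.Prime,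
          (((p : ℝ) ^ 2 - 1) / ((p : ℝ) ^ 2 + 1))| ≤ C / x := by
  classical
  refine ⟨54, by norm_num, fun x hx => ?_⟩
  set n := ⌊x⌋₊ with hn_def
  have hxpos : (0 : ℝ) < x := by linarith
  have hxn : x < (n : ℝ) + 1 := Nat.lt_floor_add_one x
  set s := Finset.Iic n with hs_def
  set z2 : ℝ := π ^ 2 / 6 with hz2_def
  set z4 : ℝ := π ^ 4 / 90 with hz4_def
  set Q : ℝ := ∏ p ∈ s.filter Nat.Prime, (1 - ((p : ℝ) ^ 2)⁻¹)⁻¹ with hQ_def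
  set R : ℝ := ∏ p ∈ s.filter Nat.Prime, (1 - ((p : ℝ) ^ 4)⁻¹)⁻¹ with hR_def
  set P : ℝ := ∏ p ∈ s.filter Nat.Prime, (((p : ℝ) ^ 2 - 1) / ((p : ℝ) ^ 2 + 1)) with hP_def
  -- facts about primes in the product
  have hprime_fact : ∀ p ∈ s.filter Nat.Prime, (2 : ℝ) ≤ (p : ℝ) := by
    intro p hp
    rw [Finset.mem_filter] at hp
    exact_mod_cast hp.2.two_le
  -- Euler products
  have hQ : Q = ∑' m : Nat.factoredNumbers s, sqHom (m : ℕ) := by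
    rw [hQ_def]
    exact EulerProduct.prod_filter_prime_geometric_eq_tsum_factoredNumbers summable_sqHom s
  have hR : R = ∑' m : Nat.factoredNumbers s, quarticHom (m : ℕ) := by
    rw [hR_def]
    exact EulerProduct.prod_filter_prime_geometric_eq_tsum_factoredNumbers summable_quarticHom s
  -- zeta values
  have hz2 : (∑' m : ℕ, sqHom m) = z2 := by
    rw [hz2_def]
    have := hasSum_zeta_two.tsum_eq
    simpa [one_div] using this
  have hz4 : (∑' m : ℕ, quarticHom m) = z4 := by
    rw [hz4_def]
    have := hasSum_zeta_four.tsum_eq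
    simpa [one_div] using this
  -- tail bounds
  have hub4 : ∀ m : ℕ, ((m : ℝ) ^ 4)⁻¹ ≤ ((m : ℝ) ^ 2)⁻¹ := by
    intro m
    rcases Nat.eq_zero_or_pos m with rfl | hm
    · simp
    · have h1 : (1 : ℝ) ≤ (m : ℝ) := by exact_mod_cast hm
      have : (m : ℝ) ^ 2 ≤ (m : ℝ) ^ 4 := pow_le_pow_right₀ h1 (by norm_num)
      exact inv_anti₀ (by positivity) this
  obtain ⟨hQ0, hQtail⟩ := tail_bound (fun m => ((m : ℝ) ^ 2)⁻¹)
    (by simpa using (Real.summable_nat_pow_inv (p := 2)).mpr one_lt_two)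
    (by norm_num) (fun m => by positivity) (fun m => le_refl _) n
  obtain ⟨hR0, hRtail⟩ := tail_bound (fun m => ((m : ℝ) ^ 4)⁻¹)
    (by simpa using (Real.summable_nat_pow_inv (p := 4)).mpr (by norm_num))
    (by norm_num) (fun m => by positivity) hub4 n
  simp only [sqHom_apply] at hQ hz2
  simp only [quarticHom_apply] at hR hz4
  rw [← hs_def] at hQ0 hQtail hR0 hRtail
  rw [hz2, ← hQ] at hQ0 hQtail
  rw [hz4, ← hR] at hR0 hRtail
  -- lower bounds on Q and R
  have hfac2 : ∀ p ∈ s.filter Nat.Prime, (1 : ℝ) ≤ (1 - ((p : ℝ) ^ 2)⁻¹)⁻¹ := by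
    intro p hp
    have h2 := hprime_fact p hp
    have hinv0 : (0 : ℝ) ≤ ((p : ℝ) ^ 2)⁻¹ := by positivity
    have hlt : ((p : ℝ) ^ 2)⁻¹ ≤ 1 / 4 := by
      have h16 : (4 : ℝ) ≤ (p : ℝ) ^ 2 := by nlinarith
      calc ((p : ℝ) ^ 2)⁻¹ ≤ (4 : ℝ)⁻¹ := inv_anti₀ (by norm_num) h16
        _ = 1 / 4 := by norm_num
    rw [one_le_inv_iff₀]
    constructor <;> nlinarith
  have hfac4 : ∀ p ∈ s.filter Nat.Prime, (1 : ℝ) ≤ (1 - ((p : ℝ) ^ 4)⁻¹)⁻¹ := by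
    intro p hp
    have h2 := hprime_fact p hp
    have hinv0 : (0 : ℝ) ≤ ((p : ℝ) ^ 4)⁻¹ := by positivity
    have hlt : ((p : ℝ) ^ 4)⁻¹ ≤ 1 / 16 := by
      have h16 : (16 : ℝ) ≤ (p : ℝ) ^ 4 := by
        have h4 : (4 : ℝ) ≤ (p : ℝ) ^ 2 := by nlinarith
        nlinarith
      calc ((p : ℝ) ^ 4)⁻¹ ≤ (16 : ℝ)⁻¹ := inv_anti₀ (by norm_num) h16
        _ = 1 / 16 := by norm_num
    rw [one_le_inv_iff₀]
    constructor <;> nlinarith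
  have hQ1 : (1 : ℝ) ≤ Q := by
    rw [hQ_def]
    exact le_trans (le_of_eq (Finset.prod_const_one).symm)
      (Finset.prod_le_prod (fun i _ => zero_le_one) hfac2)
  have hR1 : (1 : ℝ) ≤ R := by
    rw [hR_def]
    exact le_trans (le_of_eq (Finset.prod_const_one).symm)
      (Finset.prod_le_prod (fun i _ => zero_le_one) hfac4)
  -- upper bounds on zeta values
  have hpi : π ≤ 4 := Real.pi_le_four
  have hpi0 : 0 < π := Real.pi_pos
  have hz2ub : z2 ≤ 3 := by rw [hz2_def]; nlinarith
  have hz4ub : z4 ≤ 3 := by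
    rw [hz4_def]
    have hsq : π ^ 2 ≤ 16 := by nlinarith
    nlinarith
  have hz2lb : (1 : ℝ) ≤ z2 := le_trans hQ1 (by linarith)
  -- product identity : P * Q^2 = R
  have hPQR : P * Q ^ 2 = R := by
    rw [hP_def, hQ_def, hR_def, ← Finset.prod_pow, ← Finset.prod_mul_distrib]
    refine Finset.prod_congr rfl fun p hp => ?_
    have h2 := hprime_fact p hp
    set a : ℝ := (p : ℝ)
    have ha : (0 : ℝ) < a := by linarith
    have ha2 : a ^ 2 ≠ 0 := by positivity
    have ha4 : a ^ 4 ≠ 0 := by positivity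
    have h4 : (4 : ℝ) ≤ a ^ 2 := by nlinarith
    have h16 : (16 : ℝ) ≤ a ^ 4 := by nlinarith
    have h21 : a ^ 2 - 1 ≠ 0 := by nlinarith
    have h2p1 : a ^ 2 + 1 ≠ 0 := by positivity
    have h41 : a ^ 4 - 1 ≠ 0 := by nlinarith
    have hinv2 : (a ^ 2)⁻¹ ≤ 1 / 4 := by
      calc (a ^ 2)⁻¹ ≤ (4 : ℝ)⁻¹ := inv_anti₀ (by norm_num) h4
        _ = 1 / 4 := by norm_num
    have hinv4 : (a ^ 4)⁻¹ ≤ 1 / 16 := by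
      calc (a ^ 4)⁻¹ ≤ (16 : ℝ)⁻¹ := inv_anti₀ (by norm_num) h16
        _ = 1 / 16 := by norm_num
    have hne2 : 1 - (a ^ 2)⁻¹ ≠ 0 := by
      have : (0 : ℝ) < 1 - (a ^ 2)⁻¹ := by linarith
      exact this.ne'
    have hne4 : 1 - (a ^ 4)⁻¹ ≠ 0 := by
      have : (0 : ℝ) < 1 - (a ^ 4)⁻¹ := by linarith
      exact this.ne'
    have e2 : 1 - (a ^ 2)⁻¹ = (a ^ 2 - 1) / a ^ 2 := by field_simp
    have e4 : 1 - (a ^ 4)⁻¹ = (a ^ 4 - 1) / a ^ 4 := by field_simp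
    rw [e2, e4, inv_div, inv_div]
    field_simp
    ring
  have hQ0' : (0 : ℝ) < Q := lt_of_lt_of_le one_pos hQ1
  have hP_eq : P = R / Q ^ 2 := by
    rw [eq_div_iff (by positivity)]
    exact hPQR
  have h25 : (2 / 5 : ℝ) = z4 / z2 ^ 2 := by
    rw [hz2_def, hz4_def]
    field_simp
    ring
  -- final computation
  have hden1 : (1 : ℝ) ≤ |z2 ^ 2 * Q ^ 2| := by
    rw [abs_of_pos (by positivity)]
    have h1 : (1 : ℝ) ≤ z2 ^ 2 := by nlinarith
    have h2 : (1 : ℝ) ≤ Q ^ 2 := by nlinarith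
    nlinarith
  have hz2Q : Q ≤ z2 := by linarith
  have hz4R : R ≤ z4 := by linarith
  set ε : ℝ := 2 / ((n : ℝ) + 1) with hε_def
  have hε0 : 0 ≤ ε := by positivity
  have hA0 : 0 ≤ z4 * (z2 + Q) * (z2 - Q) :=
    mul_nonneg (mul_nonneg (by linarith) (by linarith)) hQ0
  have hA : z4 * (z2 + Q) * (z2 - Q) ≤ 18 * ε := by
    have h1 : z4 * (z2 + Q) * (z2 - Q) ≤ z4 * (z2 + Q) * ε :=
      mul_le_mul_of_nonneg_left hQtail (mul_nonneg (by linarith) (by linarith))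
    have h2 : z4 * (z2 + Q) * ε ≤ 18 * ε :=
      mul_le_mul_of_nonneg_right (by nlinarith) hε0
    linarith
  have hB0 : 0 ≤ z2 ^ 2 * (z4 - R) := mul_nonneg (sq_nonneg z2) hR0
  have hB : z2 ^ 2 * (z4 - R) ≤ 9 * ε := by
    have h1 : z2 ^ 2 * (z4 - R) ≤ z2 ^ 2 * ε :=
      mul_le_mul_of_nonneg_left hRtail (sq_nonneg z2)
    have h2 : z2 ^ 2 * ε ≤ 9 * ε := mul_le_mul_of_nonneg_right (by nlinarith) hε0
    linarith
  have hnum : |z4 * Q ^ 2 - z2 ^ 2 * R| ≤ 27 * ε := by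
    have hid : z4 * Q ^ 2 - z2 ^ 2 * R
        = -(z4 * (z2 + Q) * (z2 - Q)) + z2 ^ 2 * (z4 - R) := by ring
    rw [hid, abs_le]
    constructor <;> linarith
  have hgoal : |2 / 5 - P| ≤ 27 * ε := by
    rw [hP_eq, h25, div_sub_div _ _ (by positivity) (by positivity), abs_div]
    calc |z4 * Q ^ 2 - z2 ^ 2 * R| / |z2 ^ 2 * Q ^ 2|
        ≤ |z4 * Q ^ 2 - z2 ^ 2 * R| / 1 :=
          div_le_div_of_nonneg_left (abs_nonneg _) one_pos hden1
      _ = |z4 * Q ^ 2 - z2 ^ 2 * R| := by rw [div_one]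
      _ ≤ 27 * ε := hnum
  have hfinal : 27 * ε ≤ 54 / x := by
    have hn0 : (0 : ℝ) ≤ (n : ℝ) := Nat.cast_nonneg n
    have he : 27 * ε = 54 / ((n : ℝ) + 1) := by rw [hε_def]; ring
    rw [he, div_le_div_iff₀ (by linarith) hxpos]
    linarith
  calc |2 / 5 - P| ≤ 27 * ε := hgoal
    _ ≤ 54 / x := hfinal
end

section
/- There exist constants c₃ > 0 and c₂ such that π(x) ≥ c₃ log x + c₂ for all x ≥ 2, where π(x) is the prime counting function. (Proof via the rational value ∏_p (p²−1)/(p²+1) = 2/5: since 2/5 is rational with |2/5 − p/q| ≥ c/q for reduced fractions p/q ≠ 2/5, and the partial products p_x/q_x satisfy q_x ≥ 2^{π(x)−2} and |2/5 − p_x/q_x| ≤ C/x.) -/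
lemma pow_le_primeCounting : ∀ k : ℕ, k ≤ Nat.primeCounting (2 ^ k) := by
  intro k
  induction k with
  | zero => simp
  | succ k ih =>
    obtain ⟨p, hp, h1, h2⟩ := Nat.bertrand (2 ^ k) (by positivity)
    have hcount : Nat.primeCounting' p + 1 = Nat.primeCounting' (p + 1) := by
      rw [Nat.primeCounting', Nat.count_succ]
      simp [hp]
    calc k + 1 ≤ Nat.primeCounting (2 ^ k) + 1 := by omega
      _ ≤ Nat.primeCounting' p + 1 := by
          exact Nat.add_le_add_right (Nat.monotone_primeCounting' (by omega)) 1
      _ = Nat.primeCounting' (p + 1) := hcount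
      _ ≤ Nat.primeCounting (2 ^ (k + 1)) :=
          Nat.monotone_primeCounting' (by rw [pow_succ]; omega)

theorem primeCounting_log_lower_bound :
    ∃ c₃ > (0 : ℝ), ∃ c₂ : ℝ, ∀ x : ℝ, 2 ≤ x →
      c₃ * Real.log x + c₂ ≤ (Nat.primeCounting ⌊x⌋₊ : ℝ) := by
  refine ⟨1 / Real.log 2, by positivity, -1, fun x hx => ?_⟩
  set k := Nat.log 2 ⌊x⌋₊ with hk
  have hfl : (2:ℕ) ≤ ⌊x⌋₊ := Nat.le_floor (by exact_mod_cast hx)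
  have h1 : 2 ^ k ≤ ⌊x⌋₊ := Nat.pow_log_le_self 2 (by omega)
  have h2 : ⌊x⌋₊ < 2 ^ (k + 1) := Nat.lt_pow_succ_log_self (by norm_num) _
  have hπ : (k : ℝ) ≤ (Nat.primeCounting ⌊x⌋₊ : ℝ) := by
    exact_mod_cast (pow_le_primeCounting k).trans (Nat.monotone_primeCounting h1)
  have hxlt : x < 2 ^ (k + 1) := by
    calc x < ⌊x⌋₊ + 1 := Nat.lt_floor_add_one x
      _ ≤ (2 : ℝ) ^ (k + 1) := by exact_mod_cast h2
  have hlog : Real.log x ≤ (k + 1) * Real.log 2 := by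
    calc Real.log x ≤ Real.log (2 ^ (k + 1)) :=
          Real.log_le_log (by linarith) hxlt.le
      _ = (k + 1) * Real.log 2 := by rw [Real.log_pow]; push_cast; ring
  have hl2 : 0 < Real.log 2 := Real.log_pos (by norm_num)
  have : 1 / Real.log 2 * Real.log x ≤ k + 1 := by
    rw [div_mul_eq_mul_div, div_le_iff₀ hl2]
    linarith
  linarith
end
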